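/- Let k₁, k₂ be positive integers and k = k₁ + k₂. Let p ∈ P_k, p₁ ∈ P_{k₁}, p₂ ∈ P_{k₂}, and suppose p₁⊗p₂ is finer than p. Then df(p₁⊗p₂, p) = df(p₁, p^l) + df(p₂, p^r) + df(p^l⊗p^r, p), where p^l ∈ P_{k₁} and p^r ∈ P_{k₂} are the left and right parts of p and df denotes the defect with base id. In particular, p₁⊗p₂ ⊐ p if and only if p₁ ⊐ p^l, p₂ ⊐ p^r, and p^l⊗p^r ⊐ p. -/

import Mathlib

open Sum
open scoped Classical

noncomputable section

namespace PartitionPaper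

variable {X : Type*}

/-- The number of blocks of a partition of `X`, encoded as a setoid on `X`. -/
def nc (p : Setoid X) : ℕ := Nat.card (Quotient p)

/-- The geodesic distance `d(p,p') = (nc p + nc p')/2 - nc (p ⊔ p')`. -/
def pdist (p q : Setoid X) : ℚ :=
  ((nc p : ℚ) + (nc q : ℚ)) / 2 - (nc (p ⊔ q) : ℚ)

/-- Geodesic order with base partition `b` : `p' ≤_b p`. -/
def geoLE (b p' p : Setoid X) : Prop := pdist b p' + pdist p' p = pdist b p

/-- Coarser-compatible order `p' ⊣_b p` : `p'` coarser than `p` and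
`nc (p' ⊔ b) = nc (p ⊔ b)`.  (In the setoid lattice, `p ≤ p'` means `p` is finer.) -/
def coarserComp (b p' p : Setoid X) : Prop :=
  p ≤ p' ∧ nc (p' ⊔ b) = nc (p ⊔ b)

/-- Finer-compatible order `p' ⊐_b p` : `p'` finer than `p` and
`nc p' - nc (p' ⊔ b) = nc p - nc (p ⊔ b)`. -/
def finerComp (b p' p : Setoid X) : Prop :=
  p' ≤ p ∧ (nc p' : ℤ) - (nc (p' ⊔ b) : ℤ) = (nc p : ℤ) - (nc (p ⊔ b) : ℤ)

/-- `p'` is obtained from `p` by gluing two blocks of `p` into one. -/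
def IsGluing (p p' : Setoid X) : Prop := p ≤ p' ∧ nc p' + 1 = nc p

/-- The Cayley graph on partitions of `X`: an edge iff one partition is obtained
from the other by gluing two of its blocks into one. -/
def glueGraph (X : Type*) : SimpleGraph (Setoid X) where
  Adj p q := IsGluing p q ∨ IsGluing q p
  symm := ⟨fun _ _ h => h.elim Or.inr Or.inl⟩
  loopless := by
    refine ⟨?_⟩
    intro p h
    rcases h with ⟨-, h⟩ | ⟨-, h⟩ <;> omega

/-- The segment `[p₁, p₂]` for the geodesic distance. -/
def seg (p₁ p₂ : Setoid X) : Set (Setoid X) :=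
  {p | pdist p₁ p + pdist p p₂ = pdist p₁ p₂}

/-- The defect of `p'` from being on `[b, p]`. -/
def df (b p' p : Setoid X) : ℚ := pdist b p' + pdist p' p - pdist b p

/-- Admissible one-step splits: `p'` is obtained by cutting a (pivotal) block of `p`
into two blocks in such a way that the join with `b` gains one block. -/
def Delta (b p : Setoid X) : Set (Setoid X) :=
  {p' | p' ≤ p ∧ nc p' = nc p + 1 ∧ nc (p' ⊔ b) = nc (p ⊔ b) + 1}

/-- The admissible splits `Sp_b(p) = ⋃ₘ Δ_b^m(p)`. -/
def Sp (b p : Setoid X) : Set (Setoid X) :=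
  {p' | Relation.ReflTransGen (fun u v => v ∈ Delta b u) p p'}

/-- The admissible gluings `Gl_b(p)`: partitions obtained by gluing blocks of `p`
without altering the number of blocks of the join with `b`. -/
def Gl (b p : Setoid X) : Set (Setoid X) :=
  {p' | p ≤ p' ∧ nc (p' ⊔ b) = nc (p ⊔ b)}

/-- `p'` is directly smaller than `p` for the relation `r`. -/
def DirectlySmaller (r : Setoid X → Setoid X → Prop) (p' p : Setoid X) : Prop :=
  r p' p ∧ p' ≠ p ∧ ¬ ∃ p'', p'' ≠ p ∧ p'' ≠ p' ∧ r p' p'' ∧ r p'' p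

/-- The block of the partition `p` corresponding to a class `c`. -/
def blockSet (p : Setoid X) (c : Quotient p) : Set X := {x | Quotient.mk p x = c}

/-- The number of blocks of `q` contained in the block `c` of `p`. -/
def numSubBlocks (q p : Setoid X) (c : Quotient p) : ℕ :=
  Nat.card {d : Quotient q // blockSet q d ⊆ blockSet p c}

/-- The number of blocks of `p` containing exactly `i` blocks of `q`. -/
def rcount (q p : Setoid X) (i : ℕ) : ℕ :=
  Nat.card {c : Quotient p // numSubBlocks q p c = i}

/-- The Möbius function of the refinement order:
`μ_f(q,p) = (-1)^(nc q - nc p) ∏_i ((i-1)!)^(r_i)` for `q` finer than `p`. -/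
def muf (q p : Setoid X) : ℤ :=
  (-1) ^ (nc q - nc p) *
    ∏ i ∈ Finset.range (nc q + 1), ((Nat.factorial (i - 1) : ℤ)) ^ (rcount q p i)

/-- `P_k`: partitions of `{1,…,k} ∪ {1',…,k'}`, the left summand being the
unprimed (top) row and the right summand the primed (bottom) row. -/
abbrev Pk (k : ℕ) := Setoid (Fin k ⊕ Fin k)

/-- The identity partition `id_k = {{i, i'} : 1 ≤ i ≤ k}`. -/
def idk (k : ℕ) : Pk k := Setoid.ker (Sum.elim id id)

/-- The permutation partition associated with `σ`, with blocks `{i, σ(i)'}`. -/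
def permPartition {k : ℕ} (σ : Equiv.Perm (Fin k)) : Pk k :=
  Setoid.ker (Sum.elim id σ.symm)

/-- `S_k`, the set of permutation partitions. -/
def Sk (k : ℕ) : Set (Pk k) := Set.range (permPartition (k := k))

/-- `B_k`, the set of Brauer partitions: all blocks have exactly two elements. -/
def Bk (k : ℕ) : Set (Pk k) := {p | ∀ x, Nat.card {y | p.r x y} = 2}

/-- Embedding of the top/bottom rows of the upper diagram `q` into the
three-row diagram (top ⊕ (middle ⊕ bottom)). -/
def upMap (k : ℕ) : Fin k ⊕ Fin k → Fin k ⊕ (Fin k ⊕ Fin k) :=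
  Sum.elim Sum.inl (fun i => Sum.inr (Sum.inl i))

/-- Embedding of the top/bottom rows of the lower diagram `p` into the
three-row diagram. -/
def downMap (k : ℕ) : Fin k ⊕ Fin k → Fin k ⊕ (Fin k ⊕ Fin k) :=
  Sum.elim (fun i => Sum.inr (Sum.inl i)) (fun i => Sum.inr (Sum.inr i))

/-- The partition of the three-row diagram obtained by stacking a diagram of `q`
on top of a diagram of `p` (identifying the bottom row of `q` with the top row
of `p`): the equivalence relation generated by the copies of `q` and `p`. -/
def stackSetoid {k : ℕ} (p q : Pk k) : Setoid (Fin k ⊕ (Fin k ⊕ Fin k)) :=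
  sInf {s | ∀ x y,
    ((∃ a b, upMap k a = x ∧ upMap k b = y ∧ q.r a b) ∨
     (∃ a b, downMap k a = x ∧ downMap k b = y ∧ p.r a b)) → s.r x y}

/-- The composition `p ∘ q` (a diagram of `q` stacked above a diagram of `p`),
obtained by restricting the stacked partition to the outer rows. -/
def comp {k : ℕ} (p q : Pk k) : Pk k :=
  Setoid.comap (Sum.elim Sum.inl (fun i => Sum.inr (Sum.inr i))) (stackSetoid p q)

/-- `κ(p,q)`: the number of connected components of the stacked diagram entirely
contained in the middle row. -/
def kappaP {k : ℕ} (p q : Pk k) : ℕ :=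
  Nat.card {c : Quotient (stackSetoid p q) //
    ∀ x, Quotient.mk (stackSetoid p q) x = c → ∃ i : Fin k, x = Sum.inr (Sum.inl i)}

/-- The transpose `ᵗp`, exchanging the two rows. -/
def transpose {k : ℕ} (p : Pk k) : Pk k := Setoid.comap Sum.swap p

/-- The disjoint-union partition on a sum type. -/
def sumSetoid {α β : Type*} (p : Setoid α) (q : Setoid β) : Setoid (α ⊕ β) :=
  Setoid.ker (Sum.map (Quotient.mk p) (Quotient.mk q))

/-- Reindexing of the rows for the tensor product. -/
def reindex (k l : ℕ) :
    Fin (k + l) ⊕ Fin (k + l) → (Fin k ⊕ Fin k) ⊕ (Fin l ⊕ Fin l) :=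
  Sum.elim
    (fun j => Sum.elim (fun a => Sum.inl (Sum.inl a)) (fun b => Sum.inr (Sum.inl b))
      (finSumFinEquiv.symm j))
    (fun j => Sum.elim (fun a => Sum.inl (Sum.inr a)) (fun b => Sum.inr (Sum.inr b))
      (finSumFinEquiv.symm j))

/-- The tensor product `p ⊗ q ∈ P_{k+l}`: a diagram of `p` placed to the left of
a diagram of `q`. -/
def tensor {k l : ℕ} (p : Pk k) (q : Pk l) : Pk (k + l) :=
  Setoid.comap (reindex k l) (sumSetoid p q)

/-- The `≺`-defect `η(p,q)`. -/
def eta {k : ℕ} (p q : Pk k) : ℚ :=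
  pdist (idk k) p + pdist (idk k) q - pdist (idk k) (comp p q)
    - ((k : ℚ) + (nc (comp p q) : ℚ) - (nc p : ℚ) - (nc q : ℚ)) / 2 - (kappaP p q : ℚ)

/-- The Kreweras complement of `p'` in `p`: the set of `p''` with `p = p' ∘ p''`
realizing equality in the `≺`-defect inequality. -/
def Krew {k : ℕ} (p p' : Pk k) : Set (Pk k) :=
  {p'' | comp p' p'' = p ∧ eta p' p'' = 0}

/-- `p' ≺ p` : `p'` is an admissible prefix of `p`. -/
def prec {k : ℕ} (p' p : Pk k) : Prop :=
  ∃ p'', comp p' p'' = p ∧ eta p' p'' = 0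

/-- The partition of `{1,…,k}` into the orbits (cycles) of the permutation `σ`. -/
def cycleSetoid {k : ℕ} (σ : Equiv.Perm (Fin k)) : Setoid (Fin k) :=
  ⟨σ.SameCycle,
    ⟨fun x => Equiv.Perm.SameCycle.refl σ x, fun h => h.symm, fun h₁ h₂ => h₁.trans h₂⟩⟩

/-- A partition of `{1,…,k}` is non-crossing if there are no `a < b < c < d` with
`a, c` in one block and `b, d` in a different block. -/
def NonCrossing {k : ℕ} (π : Setoid (Fin k)) : Prop :=
  ¬ ∃ a b c d : Fin k, a < b ∧ b < c ∧ c < d ∧ π.r a c ∧ π.r b d ∧ ¬ π.r a b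

/-- The map sending a permutation partition to the partition of `{1,…,k}` into
the orbits of the corresponding bijection (the blocks of `p ⊔ id_k` restricted
to the top row). -/
def orbitMap {k : ℕ} (p : Pk k) : Setoid (Fin k) :=
  Setoid.comap (Sum.inl : Fin k → Fin k ⊕ Fin k) (p ⊔ idk k)

/-- The permutation `(1,k+1)(2,k+2)⋯(k,2k)` of `{1,…,2k}`. -/
def tauPerm (k : ℕ) : Equiv.Perm (Fin (k + k)) :=
  (finSumFinEquiv.symm.trans (Equiv.sumComm (Fin k) (Fin k))).trans finSumFinEquiv

/-- The left part of a partition in `P_{k₁+k₂}`. -/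
def leftPart {k₁ k₂ : ℕ} (p : Pk (k₁ + k₂)) : Pk k₁ :=
  Setoid.comap (Sum.map (Fin.castAdd k₂) (Fin.castAdd k₂)) p

/-- The right part of a partition in `P_{k₁+k₂}`. -/
def rightPart {k₁ k₂ : ℕ} (p : Pk (k₁ + k₂)) : Pk k₂ :=
  Setoid.comap (Sum.map (Fin.natAdd k₁) (Fin.natAdd k₁)) p

/-- The `p`-moment `m_p(E_N) = Tr_N(E_N ᵗp)/N^{nc(p ⊔ id_k)}
`= ∑_{p'} (E_N)_{p'} N^{nc(p ⊔ p') - nc(p ⊔ id_k)}`. -/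
def momentF {k : ℕ} (E : ℕ → Pk k → ℂ) (p : Pk k) (N : ℕ) : ℂ :=
  ∑ᶠ p' : Pk k, E N p' * (N : ℂ) ^ ((nc (p ⊔ p') : ℤ) - (nc (p ⊔ idk k) : ℤ))

/-- The `p`-cumulant `κ_p(E_N) = N^{nc p - nc (p ⊔ id_k)} (E_N)_p`. -/
def cumulantF {k : ℕ} (E : ℕ → Pk k → ℂ) (p : Pk k) (N : ℕ) : ℂ :=
  (N : ℂ) ^ ((nc p : ℤ) - (nc (p ⊔ idk k) : ℤ)) * E N p

/-! Everything reduces to the integer `ncGap b p = nc p - nc (p ⊔ b)`: for `p' ≤ p` the defect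
`df b p' p` is `ncGap b p' - ncGap b p`, and `ncGap b` is antitone, because gluing two blocks
lowers `nc p` by one and `nc (p ⊔ b)` by at most one. Since `ncGap id` is additive under `⊗`,
the defect of `p₁ ⊗ p₂ ≤ p^l ⊗ p^r ≤ p` splits into three nonnegative summands, which vanish
together exactly when their sum does. -/

section Gap

variable {X : Type*}

def ncGap (b p : Setoid X) : ℤ := nc p - nc (p ⊔ b)

theorem nc_le_nc_of_le [Finite X] {q r : Setoid X} (h : q ≤ r) : nc r ≤ nc q :=
  Nat.card_le_card_of_surjective (Setoid.map_of_le h) (Quotient.ind fun a => ⟨⟦a⟧, rfl⟩)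

theorem eq_of_le_of_nc_eq [Finite X] {q r : Setoid X} (h : q ≤ r) (hn : nc r = nc q) :
    q = r := by
  have hinj : Function.Injective (Setoid.map_of_le h) :=
    ((Nat.bijective_iff_surjective_and_card _).2
      ⟨Quotient.ind fun a => ⟨⟦a⟧, rfl⟩, hn.symm⟩).1
  exact le_antisymm h fun a b hab => Quotient.exact (hinj (Quotient.sound hab))

def mergeBlocks (q : Setoid X) (x y : X) : Setoid X :=
  Setoid.ker fun a => if q a y then Quotient.mk q x else Quotient.mk q a

theorem mergeBlocks_apply (q : Setoid X) (x y a b : X) :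
    mergeBlocks q x y a b ↔
      (if q a y then Quotient.mk q x else Quotient.mk q a) =
        (if q b y then Quotient.mk q x else Quotient.mk q b) :=
  Setoid.ker_def

theorem le_mergeBlocks (q : Setoid X) (x y : X) : q ≤ mergeBlocks q x y := by
  intro a b hab
  have hy : q a y ↔ q b y := ⟨q.trans (q.symm hab), q.trans hab⟩
  simp only [mergeBlocks_apply, hy, Quotient.sound hab]

theorem mergeBlocks_rel (q : Setoid X) (x y : X) : mergeBlocks q x y x y := by
  by_cases hxy : q x y <;> simp [mergeBlocks_apply, hxy]

theorem mergeBlocks_le_iff {q p : Setoid X} {x y : X} :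
    mergeBlocks q x y ≤ p ↔ q ≤ p ∧ p x y := by
  refine ⟨fun h => ⟨(le_mergeBlocks q x y).trans h, h (mergeBlocks_rel q x y)⟩, ?_⟩
  rintro ⟨hq, hxy⟩ a b hab
  have hay : q a y → p a x := fun h => p.trans (hq h) (p.symm hxy)
  have hby : q b y → p x b := fun h => p.trans hxy (p.symm (hq h))
  rw [mergeBlocks_apply] at hab
  split_ifs at hab with ha hb hb
  · exact p.trans (hay ha) (hby hb)
  · exact p.trans (hay ha) (hq (Quotient.exact hab))
  · exact p.trans (hq (Quotient.exact hab)) (hby hb)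
  · exact hq (Quotient.exact hab)

theorem mergeBlocks_sup (q b : Setoid X) (x y : X) :
    mergeBlocks q x y ⊔ b = mergeBlocks (q ⊔ b) x y := by
  refine le_antisymm (sup_le ?_ (le_sup_right.trans (le_mergeBlocks _ x y))) ?_
  · exact mergeBlocks_le_iff.2
      ⟨le_sup_left.trans (le_mergeBlocks _ x y), mergeBlocks_rel _ x y⟩
  · exact mergeBlocks_le_iff.2
      ⟨sup_le_sup_right (le_mergeBlocks q x y) b,
        (le_sup_left : mergeBlocks q x y ≤ _) (mergeBlocks_rel q x y)⟩

theorem mergeBlocks_of_rel {q : Setoid X} {x y : X} (h : q x y) : mergeBlocks q x y = q :=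
  le_antisymm (mergeBlocks_le_iff.2 ⟨le_rfl, h⟩) (le_mergeBlocks q x y)

/-- Every block of `q` other than that of `y` is still the image of one of its points. -/
theorem nc_le_nc_mergeBlocks_add_one [Finite X] (q : Setoid X) (x y : X) :
    nc q ≤ nc (mergeBlocks q x y) + 1 := by
  set f : X → Quotient q := fun a => if q a y then Quotient.mk q x else Quotient.mk q a
  have hcover : (Set.univ : Set (Quotient q)) ⊆ insert ⟦y⟧ (Set.range f) := by
    refine fun c _ => Quotient.inductionOn c fun a => ?_
    by_cases hay : q a y
    · exact Or.inl (Quotient.sound hay)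
    · exact Or.inr ⟨a, if_neg hay⟩
  calc nc q = (Set.univ : Set (Quotient q)).ncard := (Set.ncard_univ _).symm
    _ ≤ (insert ⟦y⟧ (Set.range f)).ncard := Set.ncard_le_ncard hcover
    _ ≤ (Set.range f).ncard + 1 := Set.ncard_insert_le _ _
    _ = nc (mergeBlocks q x y) + 1 := by
      rw [← Nat.card_coe_set_eq, nc, mergeBlocks,
        Nat.card_congr (Setoid.quotientKerEquivRange f)]

theorem nc_mergeBlocks_lt [Finite X] {q : Setoid X} {x y : X} (h : ¬ q x y) :
    nc (mergeBlocks q x y) < nc q := by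
  refine (nc_le_nc_of_le (le_mergeBlocks q x y)).lt_of_ne fun hn => h ?_
  rw [eq_of_le_of_nc_eq (le_mergeBlocks q x y) hn]
  exact mergeBlocks_rel q x y

theorem ncGap_mergeBlocks_le [Finite X] (b q : Setoid X) (x y : X) :
    ncGap b (mergeBlocks q x y) ≤ ncGap b q := by
  by_cases hxy : q x y
  · rw [mergeBlocks_of_rel hxy]
  have hlt := nc_mergeBlocks_lt hxy
  have hjoin := nc_le_nc_mergeBlocks_add_one (q ⊔ b) x y
  rw [ncGap, ncGap, mergeBlocks_sup]
  omega

/-- Gluing the pairs related by `p` but not by `p'` one at a time leads from `p'` to `p`. -/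
theorem ncGap_antitone [Finite X] (b : Setoid X) {p' p : Setoid X} (h : p' ≤ p) :
    ncGap b p ≤ ncGap b p' := by
  induction hn : nc p' using Nat.strong_induction_on generalizing p' with
  | _ n ih =>
    by_cases heq : p' = p
    · rw [heq]
    obtain ⟨x, y, hp, hp'⟩ : ∃ x y, p x y ∧ ¬ p' x y := by
      by_contra! hle
      exact heq (le_antisymm h hle)
    exact (ih _ (hn ▸ nc_mergeBlocks_lt hp') (mergeBlocks_le_iff.2 ⟨h, hp⟩) rfl).trans
      (ncGap_mergeBlocks_le b p' x y)

theorem df_eq_ncGap_sub {b p' p : Setoid X} (h : p' ≤ p) :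
    df b p' p = ((ncGap b p' - ncGap b p : ℤ) : ℚ) := by
  simp only [df, pdist, ncGap, sup_eq_right.2 h, sup_comm b]
  push_cast
  ring

theorem df_nonneg [Finite X] (b : Setoid X) {p' p : Setoid X} (h : p' ≤ p) :
    0 ≤ df b p' p := by
  rw [df_eq_ncGap_sub h]
  exact_mod_cast sub_nonneg.2 (ncGap_antitone b h)

theorem finerComp_iff_df_eq_zero {b p' p : Setoid X} (h : p' ≤ p) :
    finerComp b p' p ↔ df b p' p = 0 := by
  rw [df_eq_ncGap_sub h, Int.cast_eq_zero, sub_eq_zero]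
  exact and_iff_right h

end Gap

section SumSetoid

variable {α β : Type*}

@[simp]
theorem sumSetoid_inl_inl (p : Setoid α) (q : Setoid β) (a b : α) :
    sumSetoid p q (inl a) (inl b) ↔ p a b := by
  rw [sumSetoid, Setoid.ker_def]
  simp [Quotient.eq]

@[simp]
theorem sumSetoid_inr_inr (p : Setoid α) (q : Setoid β) (a b : β) :
    sumSetoid p q (inr a) (inr b) ↔ q a b := by
  rw [sumSetoid, Setoid.ker_def]
  simp [Quotient.eq]

@[simp]
theorem sumSetoid_inl_inr (p : Setoid α) (q : Setoid β) (a : α) (b : β) :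
    ¬ sumSetoid p q (inl a) (inr b) := by
  rw [sumSetoid, Setoid.ker_def]
  simp

@[simp]
theorem sumSetoid_inr_inl (p : Setoid α) (q : Setoid β) (a : β) (b : α) :
    ¬ sumSetoid p q (inr a) (inl b) := by
  rw [sumSetoid, Setoid.ker_def]
  simp

theorem gc_sumSetoid :
    GaloisConnection (fun pq : Setoid α × Setoid β => sumSetoid pq.1 pq.2)
      (fun s => (Setoid.comap inl s, Setoid.comap inr s)) := by
  refine fun pq s => ⟨fun h => ⟨fun a b hab => h ?_, fun a b hab => h ?_⟩, ?_⟩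
  · simpa using hab
  · simpa using hab
  · rintro ⟨hl, hr⟩ (a | a) (b | b) hab <;> simp at hab
    · exact hl hab
    · exact hr hab

theorem sumSetoid_sup (p₁ p₂ : Setoid α) (q₁ q₂ : Setoid β) :
    sumSetoid p₁ q₁ ⊔ sumSetoid p₂ q₂ = sumSetoid (p₁ ⊔ p₂) (q₁ ⊔ q₂) :=
  (gc_sumSetoid.l_sup (a₁ := (p₁, q₁)) (a₂ := (p₂, q₂))).symm

theorem sumSetoid_ker {γ δ : Type*} (f : α → γ) (g : β → δ) :
    sumSetoid (Setoid.ker f) (Setoid.ker g) = Setoid.ker (Sum.map f g) := by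
  ext (a | a) (b | b) <;> simp [Setoid.ker_def]

theorem nc_sumSetoid [Finite α] [Finite β] (p : Setoid α) (q : Setoid β) :
    nc (sumSetoid p q) = nc p + nc q := by
  have hsurj : Function.Surjective (Sum.map (Quotient.mk p) (Quotient.mk q)) :=
    Sum.map_surjective.2 ⟨Quotient.mk_surjective, Quotient.mk_surjective⟩
  rw [nc, sumSetoid, Nat.card_congr (Setoid.quotientKerEquivOfSurjective _ hsurj), Nat.card_sum]
  rfl

end SumSetoid

section ComapEquiv

variable {α β : Type*}

def comapOrderIso (e : α ≃ β) : Setoid β ≃o Setoid α :=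
  Equiv.toOrderIso
    ⟨Setoid.comap e, Setoid.comap e.symm,
      fun s => Setoid.ext fun a b => by simp [Setoid.comap_rel],
      fun s => Setoid.ext fun a b => by simp [Setoid.comap_rel]⟩
    (fun _ _ h _ _ hab => h hab) (fun _ _ h _ _ hab => h hab)

theorem comap_equiv_sup (e : α ≃ β) (s t : Setoid β) :
    Setoid.comap e (s ⊔ t) = Setoid.comap e s ⊔ Setoid.comap e t :=
  (comapOrderIso e).map_sup s t

theorem nc_comap_equiv (e : α ≃ β) (s : Setoid β) : nc (Setoid.comap e s) = nc s :=
  Nat.card_congr (Quotient.congr e fun _ _ => Iff.rfl)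

end ComapEquiv

section Tensor

def reindexEquiv (k l : ℕ) :
    (Fin (k + l) ⊕ Fin (k + l)) ≃ ((Fin k ⊕ Fin k) ⊕ (Fin l ⊕ Fin l)) :=
  (Equiv.sumCongr finSumFinEquiv.symm finSumFinEquiv.symm).trans
    (Equiv.sumSumSumComm (Fin k) (Fin l) (Fin k) (Fin l))

theorem tensor_eq_comap {k l : ℕ} (p : Pk k) (q : Pk l) :
    tensor p q = Setoid.comap (reindexEquiv k l) (sumSetoid p q) := by
  have : reindex k l = reindexEquiv k l := by
    funext x
    rcases x with j | j <;> rcases h : finSumFinEquiv.symm j with a | a <;>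
      simp [reindex, reindexEquiv, h, Equiv.sumSumSumComm]
  rw [tensor, this]

theorem nc_tensor {k l : ℕ} (p : Pk k) (q : Pk l) : nc (tensor p q) = nc p + nc q := by
  rw [tensor_eq_comap, nc_comap_equiv, nc_sumSetoid]

theorem tensor_sup {k l : ℕ} (p₁ p₂ : Pk k) (q₁ q₂ : Pk l) :
    tensor p₁ q₁ ⊔ tensor p₂ q₂ = tensor (p₁ ⊔ p₂) (q₁ ⊔ q₂) := by
  simp only [tensor_eq_comap, ← comap_equiv_sup, sumSetoid_sup]

theorem leftPart_eq_comap {k l : ℕ} (p : Pk (k + l)) :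
    leftPart p = Setoid.comap inl (Setoid.comap (reindexEquiv k l).symm p) := by
  have : Sum.map (Fin.castAdd l) (Fin.castAdd l) = (reindexEquiv k l).symm ∘ inl := by
    funext x
    rcases x with a | a <;> simp [reindexEquiv, Equiv.sumSumSumComm]
  rw [leftPart, this]
  rfl

theorem rightPart_eq_comap {k l : ℕ} (p : Pk (k + l)) :
    rightPart p = Setoid.comap inr (Setoid.comap (reindexEquiv k l).symm p) := by
  have : Sum.map (Fin.natAdd k) (Fin.natAdd k) = (reindexEquiv k l).symm ∘ inr := by
    funext x
    rcases x with a | a <;> simp [reindexEquiv, Equiv.sumSumSumComm]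
  rw [rightPart, this]
  rfl

theorem leftPart_tensor {k l : ℕ} (p : Pk k) (q : Pk l) : leftPart (tensor p q) = p :=
  Setoid.ext fun a b => by
    rw [leftPart_eq_comap, tensor_eq_comap, Setoid.comap_rel, Setoid.comap_rel, Setoid.comap_rel]
    simp

theorem rightPart_tensor {k l : ℕ} (p : Pk k) (q : Pk l) : rightPart (tensor p q) = q :=
  Setoid.ext fun a b => by
    rw [rightPart_eq_comap, tensor_eq_comap, Setoid.comap_rel, Setoid.comap_rel, Setoid.comap_rel]
    simp

theorem tensor_leftPart_rightPart_le {k l : ℕ} (p : Pk (k + l)) :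
    tensor (leftPart p) (rightPart p) ≤ p := by
  rw [tensor_eq_comap, leftPart_eq_comap, rightPart_eq_comap]
  intro a b hab
  simpa [Setoid.comap_rel] using gc_sumSetoid.l_u_le (Setoid.comap (reindexEquiv k l).symm p) hab

theorem idk_add (k l : ℕ) : idk (k + l) = tensor (idk k) (idk l) := by
  have h (x : Fin (k + l) ⊕ Fin (k + l)) :
      Sum.map (Sum.elim id id) (Sum.elim id id) (reindexEquiv k l x) =
        finSumFinEquiv.symm (Sum.elim id id x) := by
    rcases x with j | j <;> rcases h : finSumFinEquiv.symm j with a | a <;>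
      simp [reindexEquiv, h, Equiv.sumSumSumComm]
  refine Setoid.ext fun a b => ?_
  unfold idk
  rw [tensor_eq_comap, sumSetoid_ker, Setoid.comap_rel, Setoid.ker_def, Setoid.ker_def,
    h, h, EmbeddingLike.apply_eq_iff_eq]

theorem ncGap_tensor {k l : ℕ} (p : Pk k) (q : Pk l) :
    ncGap (idk (k + l)) (tensor p q) = ncGap (idk k) p + ncGap (idk l) q := by
  simp only [ncGap, idk_add, tensor_sup, nc_tensor]
  push_cast
  ring

end Tensor

theorem statement14_general (k₁ k₂ : ℕ)
    (p : Pk (k₁ + k₂)) (p₁ : Pk k₁) (p₂ : Pk k₂) (hfine : tensor p₁ p₂ ≤ p) :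
    df (idk (k₁ + k₂)) (tensor p₁ p₂) p =
      df (idk k₁) p₁ (leftPart p) + df (idk k₂) p₂ (rightPart p) +
        df (idk (k₁ + k₂)) (tensor (leftPart p) (rightPart p)) p ∧
    (finerComp (idk (k₁ + k₂)) (tensor p₁ p₂) p ↔
      finerComp (idk k₁) p₁ (leftPart p) ∧ finerComp (idk k₂) p₂ (rightPart p) ∧
        finerComp (idk (k₁ + k₂)) (tensor (leftPart p) (rightPart p)) p) := by
  have hl : p₁ ≤ leftPart p := leftPart_tensor p₁ p₂ ▸ fun _ _ h => hfine h
  have hr : p₂ ≤ rightPart p := rightPart_tensor p₁ p₂ ▸ fun _ _ h => hfine h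
  have hlr := tensor_leftPart_rightPart_le p
  have hdf : df (idk (k₁ + k₂)) (tensor p₁ p₂) p =
      df (idk k₁) p₁ (leftPart p) + df (idk k₂) p₂ (rightPart p) +
        df (idk (k₁ + k₂)) (tensor (leftPart p) (rightPart p)) p := by
    rw [df_eq_ncGap_sub hfine, df_eq_ncGap_sub hl, df_eq_ncGap_sub hr, df_eq_ncGap_sub hlr,
      ncGap_tensor, ncGap_tensor]
    push_cast
    ring
  refine ⟨hdf, ?_⟩
  rw [finerComp_iff_df_eq_zero hfine, finerComp_iff_df_eq_zero hl, finerComp_iff_df_eq_zero hr,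
    finerComp_iff_df_eq_zero hlr, hdf,
    add_eq_zero_iff_of_nonneg (add_nonneg (df_nonneg _ hl) (df_nonneg _ hr)) (df_nonneg _ hlr),
    add_eq_zero_iff_of_nonneg (df_nonneg _ hl) (df_nonneg _ hr), and_assoc]

/-- If `p₁ ⊗ p₂` is finer than `p`, then
`df(p₁⊗p₂, p) = df(p₁, p^l) + df(p₂, p^r) + df(p^l⊗p^r, p)`; in particular
`p₁⊗p₂ ⊐ p` iff `p₁ ⊐ p^l`, `p₂ ⊐ p^r` and `p^l⊗p^r ⊐ p`
(everything with base partition `id`). -/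
theorem statement14 (k₁ k₂ : ℕ) (h₁ : 0 < k₁) (h₂ : 0 < k₂)
    (p : Pk (k₁ + k₂)) (p₁ : Pk k₁) (p₂ : Pk k₂) (hfine : tensor p₁ p₂ ≤ p) :
    df (idk (k₁ + k₂)) (tensor p₁ p₂) p =
      df (idk k₁) p₁ (leftPart p) + df (idk k₂) p₂ (rightPart p) +
        df (idk (k₁ + k₂)) (tensor (leftPart p) (rightPart p)) p ∧
    (finerComp (idk (k₁ + k₂)) (tensor p₁ p₂) p ↔
      finerComp (idk k₁) p₁ (leftPart p) ∧ finerComp (idk k₂) p₂ (rightPart p) ∧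
        finerComp (idk (k₁ + k₂)) (tensor (leftPart p) (rightPart p)) p) :=
  statement14_general k₁ k₂ p p₁ p₂ hfine

end PartitionPaper
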